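/- arXiv:1511.00793 — 2 statements merged into one kernel-verified Lean document; each statement's English description precedes it below -/
import Mathlib

section
/- Let φ = (φ_1,…,φ_n) be an n-tuple of formal power series over a field F with zero constant terms whose linear part is in Jordan canonical form with eigenvalues λ_1,…,λ_n. Suppose each λ_i for i = 1,…,r does not lie in the multiplicative semigroup generated by λ_{r+1},…,λ_n (i.e. λ_i ≠ λ_{r+1}^{α_{r+1}}⋯λ_n^{α_n} for all nonnegative integers α_j with at least one α_j > 0). Then there exist unique formal power series f_1,…,f_r ∈ F[[x_{r+1},…,x_n]] with zero constant and linear terms such that the formal subvariety defined by x_i = f_i(x_{r+1},…,x_n) for i = 1,…,r is invariant under φ, meaning φ_i(x) = f_i(φ_{r+1}(x),…,φ_n(x)) holds identically when each x_i is substituted by f_i. -/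
/-!
Write `fᵢ = ∑ c_{i,d} xᵈ` for the unknown graph. Since the linear part of `φ` is upper
triangular, the `d`-th coefficient of `φᵢ(f, x) - fᵢ(φ(f, x))` is `(λᵢ - λᵈ) c_{i,d}` plus an
expression in coefficients `c_{j,e}` that come earlier in the lexicographic order on
(degree of `e`, `r - j`, weight `∑ k eₖ` of `e`): substituting the linear part
`xₖ ↦ λₖ xₖ + ε xₖ₊₁` into `xᵉ` only produces monomials of weight at least that of `e`, and
`φᵢ` involves `x_{i+1}` besides `xᵢ`. Non-resonance makes each `λᵢ - λᵈ` invertible, so the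
coefficients are determined one at a time by well-founded recursion along this order, which
gives existence and uniqueness at once. The other coefficients of the invariance equation
vanish by themselves; for the linear ones this is non-resonance with `|α| = 1`, which forbids a
nonzero Jordan coupling between a graph coordinate `xᵢ` and a free coordinate `x_{i+1}`.
-/

/-- Substitution of the tuple `g` into the multivariate power series `f`; this gives
the composite `f(g₁,…,gₙ)` whenever each `gᵢ` has zero constant term. -/
noncomputable def mvComp {F : Type*} [CommRing F] {n : ℕ}
    (f : MvPowerSeries (Fin n) F) (g : Fin n → MvPowerSeries (Fin n) F) :
    MvPowerSeries (Fin n) F :=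
  fun d =>
    ∑ e ∈ Finset.Iic (Finsupp.equivFunOnFinite.symm fun _ => d.sum fun _ v => v),
      MvPowerSeries.coeff e f * MvPowerSeries.coeff d (∏ i, (g i) ^ (e i))

open MvPowerSeries Finsupp

namespace FormalInvariantGraph

section WeightedOrder

variable {σ R : Type*} [CommRing R] (w : σ → ℕ)

theorem le_weightedOrder_mul_sub_mul {x x' y y' : MvPowerSeries σ R} {p q t : ℕ∞}
    (hx : p + t ≤ (x - x').weightedOrder w) (hx' : p ≤ x'.weightedOrder w)
    (hy : q ≤ y.weightedOrder w) (hy' : q + t ≤ (y - y').weightedOrder w) :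
    p + q + t ≤ (x * y - x' * y').weightedOrder w := by
  rw [show x * y - x' * y' = (x - x') * y + x' * (y - y') by ring]
  refine le_trans (le_min ?_ ?_) (min_weightedOrder_le_add w)
  · calc p + q + t = (p + t) + q := add_right_comm _ _ _
      _ ≤ _ := (add_le_add hx hy).trans (le_weightedOrder_mul w)
  · calc p + q + t = p + (q + t) := add_assoc _ _ _
      _ ≤ _ := (add_le_add hx' hy').trans (le_weightedOrder_mul w)

theorem le_weightedOrder_pow_sub_pow {x x' : MvPowerSeries σ R} {p t : ℕ∞}
    (hx : p ≤ x.weightedOrder w) (hx' : p ≤ x'.weightedOrder w)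
    (hxx' : p + t ≤ (x - x').weightedOrder w) (k : ℕ) :
    k • p + t ≤ (x ^ k - x' ^ k).weightedOrder w := by
  induction k with
  | zero => simp
  | succ k ih =>
    rw [pow_succ', pow_succ', succ_nsmul']
    exact le_weightedOrder_mul_sub_mul w hxx' hx'
      ((nsmul_le_nsmul_right hx k).trans (le_weightedOrder_pow w k)) ih

theorem le_weightedOrder_prod_pow_sub [Fintype σ] (a b : σ → MvPowerSeries σ R) (s : σ → ℕ)
    {t : ℕ∞} (ha : ∀ j, s j ≤ (a j).weightedOrder w) (hb : ∀ j, s j ≤ (b j).weightedOrder w)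
    (hab : ∀ j, s j + t ≤ (a j - b j).weightedOrder w) (e : σ →₀ ℕ) :
    weight s e + t ≤ (∏ j, a j ^ e j - ∏ j, b j ^ e j).weightedOrder w := by
  have hpow : ∀ (c : σ → MvPowerSeries σ R), (∀ j, s j ≤ (c j).weightedOrder w) →
      ∀ j, (e j • s j : ℕ) ≤ (c j ^ e j).weightedOrder w := fun c hc j => by
    rw [smul_eq_mul, Nat.cast_mul, ← nsmul_eq_mul]
    exact (nsmul_le_nsmul_right (hc j) _).trans (le_weightedOrder_pow w _)
  suffices ∀ S : Finset σ, ((∑ j ∈ S, e j • s j : ℕ) : ℕ∞) + t ≤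
      (∏ j ∈ S, a j ^ e j - ∏ j ∈ S, b j ^ e j).weightedOrder w by
    simpa [weight_eq_sum] using this Finset.univ
  intro S
  induction S using Finset.cons_induction with
  | empty => simp
  | cons j S hj ih =>
    rw [Finset.sum_cons, Finset.prod_cons, Finset.prod_cons, Nat.cast_add]
    refine le_weightedOrder_mul_sub_mul w ?_ ?_ ?_ ih
    · rw [smul_eq_mul, Nat.cast_mul, ← nsmul_eq_mul]
      exact le_weightedOrder_pow_sub_pow w (ha j) (hb j) (hab j) _
    · exact hpow b hb j
    · rw [Nat.cast_sum]
      exact (Finset.sum_le_sum fun j _ => hpow a ha j).trans (le_weightedOrder_prod w _ S)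

end WeightedOrder

section Monomials

variable {σ : Type*}

theorem degree_le_one_iff {d : σ →₀ ℕ} : degree d ≤ 1 ↔ d = 0 ∨ ∃ k, d = single k 1 := by
  classical
  constructor
  · intro h
    rcases Nat.le_one_iff_eq_zero_or_eq_one.mp h with h0 | h1
    · exact .inl ((degree_eq_zero_iff d).mp h0)
    · right
      obtain ⟨k, hk⟩ : ∃ k, d k ≠ 0 := by
        by_contra! hc
        simp [(degree_eq_zero_iff d).mpr (Finsupp.ext hc)] at h1
      refine ⟨k, Finsupp.ext fun k' => ?_⟩
      have hdk : d k = 1 := le_antisymm (h1 ▸ le_degree k d) (Nat.one_le_iff_ne_zero.mpr hk)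
      rcases eq_or_ne k' k with rfl | hk'
      · simp [hdk]
      · rw [single_apply, if_neg hk'.symm]
        by_contra hk'0
        have : d k + d k' ≤ degree d := by
          rw [degree_apply, ← Finset.sum_pair (Ne.symm hk')]
          exact Finset.sum_le_sum_of_subset (by simp [Finset.insert_subset_iff, hk, hk'0])
        omega
  · rintro (rfl | ⟨k, rfl⟩) <;> simp

end Monomials

section ProdPow

variable {σ R : Type*} [CommRing R]

theorem one_le_order_of_coeff_zero {p : MvPowerSeries σ R} (h : coeff 0 p = 0) : 1 ≤ p.order :=
  one_le_order_iff_constCoeff_eq_zero.mpr h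

variable [Fintype σ]

theorem degree_le_order_prod_pow {u : σ → MvPowerSeries σ R} (hu : ∀ j, coeff 0 (u j) = 0)
    (e : σ →₀ ℕ) : ((degree e : ℕ) : ℕ∞) ≤ (∏ j, u j ^ e j).order :=
  calc ((degree e : ℕ) : ℕ∞) = ∑ j, e j • (1 : ℕ∞) := by simp [degree_eq_sum]
    _ ≤ ∑ j, (u j ^ e j).order := Finset.sum_le_sum fun j _ =>
        (nsmul_le_nsmul_right (one_le_order_of_coeff_zero (hu j)) _).trans (le_order_pow _)
    _ ≤ _ := le_order_prod _ _

theorem coeff_prod_pow_eq_zero_of_degree_lt {u : σ → MvPowerSeries σ R}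
    (hu : ∀ j, coeff 0 (u j) = 0) {d e : σ →₀ ℕ} (h : degree d < degree e) :
    coeff d (∏ j, u j ^ e j) = 0 :=
  coeff_of_lt_order ((Nat.cast_lt.mpr h).trans_le (degree_le_order_prod_pow hu e))

theorem coeff_prod_pow_eq_of_le_order_sub {u v : σ → MvPowerSeries σ R}
    (hu : ∀ j, coeff 0 (u j) = 0) (hv : ∀ j, coeff 0 (v j) = 0) {m : ℕ}
    (huv : ∀ j, (m + 1 : ℕ∞) ≤ (u j - v j).order) {d e : σ →₀ ℕ} (hd : degree d < m + degree e) :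
    coeff d (∏ j, u j ^ e j) = coeff d (∏ j, v j ^ e j) := by
  have := le_weightedOrder_prod_pow_sub (fun _ => 1) u v (fun _ => 1) (t := m)
    (fun j => by rw [Nat.cast_one]; exact one_le_order_of_coeff_zero (hu j))
    (fun j => by rw [Nat.cast_one]; exact one_le_order_of_coeff_zero (hv j))
    (fun j => by rw [Nat.cast_one, add_comm]; exact huv j) e
  rw [← degree_eq_weight_one] at this
  rw [← sub_eq_zero, ← map_sub]
  refine coeff_of_lt_order (lt_of_lt_of_le ?_ this)
  exact_mod_cast (by omega : degree d < degree e + m)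

end ProdPow

section MvComp

variable {R : Type*} [CommRing R] {n : ℕ}

theorem prod_pow_single_one {M : Type*} [CommMonoid M] (u : Fin n → M) (k : Fin n) :
    ∏ j, u j ^ (single k 1 : Fin n →₀ ℕ) j = u k := by
  rw [Finset.prod_eq_single k (fun j _ hj => by simp [hj.symm]) (by simp)]
  simp

theorem mem_Iic_iff_le_degree {d e : Fin n →₀ ℕ} :
    e ∈ Finset.Iic (equivFunOnFinite.symm fun _ => d.sum fun _ v => v) ↔
      ∀ j, e j ≤ degree d := by
  simp [Finsupp.le_def, degree_apply, Finsupp.sum]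

theorem coeff_mvComp (h : MvPowerSeries (Fin n) R) (u : Fin n → MvPowerSeries (Fin n) R)
    (d : Fin n →₀ ℕ) :
    coeff d (mvComp h u) = ∑ e ∈ Finset.Iic (equivFunOnFinite.symm fun _ => d.sum fun _ v => v),
      coeff e h * coeff d (∏ j, u j ^ e j) := rfl

theorem coeff_zero_mvComp (h : MvPowerSeries (Fin n) R) (u : Fin n → MvPowerSeries (Fin n) R) :
    coeff 0 (mvComp h u) = coeff 0 h := by
  rw [coeff_mvComp, Finset.sum_eq_single_of_mem 0 (by simp)]
  · simp
  · intro e he he0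
    exact absurd (Finsupp.ext fun j => by simpa using mem_Iic_iff_le_degree.mp he j) he0

theorem le_order_mvComp_sub_mvComp (h : MvPowerSeries (Fin n) R)
    {u v : Fin n → MvPowerSeries (Fin n) R} (hu : ∀ j, coeff 0 (u j) = 0)
    (hv : ∀ j, coeff 0 (v j) = 0) {m : ℕ} (huv : ∀ j, (m : ℕ∞) ≤ (u j - v j).order) :
    (m : ℕ∞) ≤ (mvComp h u - mvComp h v).order := by
  refine nat_le_order fun d hd => ?_
  obtain ⟨m, rfl⟩ := Nat.exists_eq_add_one_of_ne_zero (by omega : m ≠ 0)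
  rw [map_sub, coeff_mvComp, coeff_mvComp, ← Finset.sum_sub_distrib]
  refine Finset.sum_eq_zero fun e _ => ?_
  rcases eq_or_ne e 0 with rfl | he
  · simp
  · have : degree e ≠ 0 := fun h0 => he ((degree_eq_zero_iff e).mp h0)
    rw [← mul_sub, coeff_prod_pow_eq_of_le_order_sub hu hv (by exact_mod_cast huv) (by omega),
      sub_self, mul_zero]

/-- A perturbation of `u` concentrated in degrees `≥ degree d` is only seen by the linear part
of `h` at `d`. -/
theorem coeff_mvComp_sub_mvComp_of_le_order (h : MvPowerSeries (Fin n) R)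
    {u v : Fin n → MvPowerSeries (Fin n) R} (hu : ∀ j, coeff 0 (u j) = 0)
    (hv : ∀ j, coeff 0 (v j) = 0) {d : Fin n →₀ ℕ} (hd : d ≠ 0)
    (huv : ∀ j, ((degree d : ℕ) : ℕ∞) ≤ (u j - v j).order) :
    coeff d (mvComp h u) - coeff d (mvComp h v) =
      ∑ j, coeff (single j 1) h * (coeff d (u j) - coeff d (v j)) := by
  have hd1 : 1 ≤ degree d := Nat.one_le_iff_ne_zero.mpr fun h0 => hd ((degree_eq_zero_iff d).mp h0)
  obtain ⟨m, hm⟩ := Nat.exists_eq_add_of_le' hd1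
  rw [coeff_mvComp, coeff_mvComp, ← Finset.sum_sub_distrib]
  simp_rw [← mul_sub]
  rw [← Finset.sum_subset (s₁ := Finset.univ.image fun j => single j 1)]
  · rw [Finset.sum_image fun j _ k _ hjk => (single_left_injective one_ne_zero) hjk]
    simp_rw [prod_pow_single_one]
  · intro e he
    obtain ⟨j, -, rfl⟩ := Finset.mem_image.mp he
    refine mem_Iic_iff_le_degree.mpr fun k => ?_
    rw [single_apply]
    split_ifs <;> omega
  · intro e _ he
    rcases le_or_gt (degree e) 1 with he1 | he1
    · rcases degree_le_one_iff.mp he1 with rfl | ⟨k, rfl⟩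
      · simp
      · exact absurd (Finset.mem_image.mpr ⟨k, Finset.mem_univ _, rfl⟩) he
    · rw [coeff_prod_pow_eq_of_le_order_sub hu hv (m := m) (by simpa [hm] using huv) (by omega),
        sub_self, mul_zero]

theorem coeff_single_mvComp (h : MvPowerSeries (Fin n) R) {u : Fin n → MvPowerSeries (Fin n) R}
    (hu : ∀ j, coeff 0 (u j) = 0) (k : Fin n) :
    coeff (single k 1) (mvComp h u) = ∑ j, coeff (single j 1) h * coeff (single k 1) (u j) := by
  have hzero : coeff (single k 1) (mvComp h 0) = 0 := by
    refine Finset.sum_eq_zero fun e _ => ?_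
    rcases eq_or_ne e 0 with rfl | he
    · simp [coeff_one]
    · obtain ⟨j, hj⟩ : ∃ j, e j ≠ 0 := by
        by_contra! hc
        exact he (Finsupp.ext hc)
      rw [Finset.prod_eq_zero (Finset.mem_univ j) (by simp [hj]), map_zero, mul_zero]
  have := coeff_mvComp_sub_mvComp_of_le_order h (v := 0) hu (fun _ => by simp)
    (d := single k 1) (single_ne_zero.mpr one_ne_zero)
    (fun j => by simpa using one_le_order_of_coeff_zero (hu j))
  simpa [hzero] using this

theorem coeff_mvComp_sub_mvComp_of_coeff_eq_zero (h₁ h₂ : MvPowerSeries (Fin n) R)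
    {u v : Fin n → MvPowerSeries (Fin n) R} (hu : ∀ j, coeff 0 (u j) = 0)
    (hv : ∀ j, coeff 0 (v j) = 0) (hh₂ : ∀ e : Fin n →₀ ℕ, degree e ≤ 1 → coeff e h₂ = 0)
    {d : Fin n →₀ ℕ} (hd : d ≠ 0) (huv : ∀ j, ((degree d : ℕ) : ℕ∞) ≤ (u j - v j).order) :
    coeff d (mvComp h₁ u) - coeff d (mvComp h₂ v) =
      ∑ e ∈ Finset.Iic (equivFunOnFinite.symm fun _ => d.sum fun _ v => v),
        (coeff e h₁ - coeff e h₂) * coeff d (∏ j, u j ^ e j) := by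
  have hd1 : 1 ≤ degree d := Nat.one_le_iff_ne_zero.mpr fun h0 => hd ((degree_eq_zero_iff d).mp h0)
  obtain ⟨m, hm⟩ := Nat.exists_eq_add_of_le' hd1
  rw [coeff_mvComp, coeff_mvComp, ← Finset.sum_sub_distrib]
  refine Finset.sum_congr rfl fun e _ => ?_
  suffices coeff e h₂ * (coeff d (∏ j, u j ^ e j) - coeff d (∏ j, v j ^ e j)) = 0 by
    linear_combination this
  rcases le_or_gt (degree e) 1 with he1 | he1
  · rw [hh₂ e he1, zero_mul]
  · rw [coeff_prod_pow_eq_of_le_order_sub hu hv (m := m) (by simpa [hm] using huv) (by omega),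
      sub_self, mul_zero]

theorem weight_const_add (d : Fin n →₀ ℕ) :
    weight (fun k : Fin n => n + (k : ℕ)) d =
      n * degree d + weight (fun k : Fin n => (k : ℕ)) d := by
  rw [weight_eq_sum, weight_eq_sum, degree_eq_sum, Finset.mul_sum, ← Finset.sum_add_distrib]
  exact Finset.sum_congr rfl fun k _ => by simp only [smul_eq_mul]; ring

theorem prod_monomial_single_pow (c : Fin n → R) (e : Fin n →₀ ℕ) :
    ∏ j, monomial (single j 1) (c j) ^ e j = monomial e (∏ j, c j ^ e j) := by
  simp_rw [monomial_pow, prod_monomial, smul_single_one, univ_sum_single]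

theorem eq_zero_or_single_of_weight_le {j : Fin n} {d : Fin n →₀ ℕ}
    (h : weight (fun k : Fin n => n + (k : ℕ)) d ≤ n + j) : d = 0 ∨ ∃ k ≤ j, d = single k 1 := by
  rw [weight_const_add] at h
  have : degree d ≤ 1 := by
    by_contra! h2
    nlinarith [j.isLt]
  rcases degree_le_one_iff.mp this with rfl | ⟨k, rfl⟩
  · exact .inl rfl
  · refine .inr ⟨k, ?_, rfl⟩
    simp only [degree_single, weight_single, smul_eq_mul, one_mul] at h
    exact Fin.le_def.mpr (by omega)

/-- With the weight `n + k` on `xₖ`, the degree dominates the index, so `u j` is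
`c_j x_j` plus terms of weight `> n + j`, and `∏ u^e` is `c^e xᵉ` plus terms of weight
`> weight e`. -/
theorem coeff_prod_pow_of_upperTriangular {u : Fin n → MvPowerSeries (Fin n) R}
    (hu : ∀ j, coeff 0 (u j) = 0) (htri : ∀ j k : Fin n, k < j → coeff (single k 1) (u j) = 0)
    {d e : Fin n →₀ ℕ} (hdeg : degree d = degree e)
    (hwt : weight (fun k : Fin n => (k : ℕ)) d ≤ weight (fun k : Fin n => (k : ℕ)) e) :
    coeff d (∏ j, u j ^ e j) = if d = e then ∏ j, coeff (single j 1) (u j) ^ e j else 0 := by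
  set W : Fin n → ℕ := fun k => n + k
  set b : Fin n → MvPowerSeries (Fin n) R := fun j =>
    monomial (single j 1) (coeff (single j 1) (u j))
  have hu' : ∀ j, ((W j : ℕ) : ℕ∞) ≤ (u j).weightedOrder W := fun j =>
    nat_le_weightedOrder W fun d' hd' => by
      rcases eq_zero_or_single_of_weight_le hd'.le with rfl | ⟨k, hk, rfl⟩
      · exact hu j
      · refine htri j k (lt_of_le_of_ne hk fun hkj => ?_)
        subst hkj
        simp [W, weight_single] at hd'
  have hb : ∀ j, ((W j : ℕ) : ℕ∞) ≤ (b j).weightedOrder W := fun j =>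
    nat_le_weightedOrder W fun d' hd' => by
      rw [coeff_monomial, if_neg]
      rintro rfl
      simp [W, weight_single] at hd'
  have hub : ∀ j, ((W j : ℕ) : ℕ∞) + 1 ≤ (u j - b j).weightedOrder W := fun j => by
    refine le_of_eq_of_le (by push_cast; rfl)
      (nat_le_weightedOrder W (n := W j + 1) fun d' hd' => ?_)
    rw [map_sub, coeff_monomial]
    rcases eq_zero_or_single_of_weight_le (Nat.lt_succ_iff.mp hd') with rfl | ⟨k, hk, rfl⟩
    · rw [if_neg (Ne.symm (single_ne_zero.mpr one_ne_zero)), hu j, sub_zero]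
    · rcases lt_or_eq_of_le hk with hk | rfl
      · rw [htri j k hk, if_neg fun h => hk.ne ((single_left_injective one_ne_zero) h), sub_zero]
      · simp
  have hprod := le_weightedOrder_prod_pow_sub W u b W hu' hb hub e
  rw [prod_monomial_single_pow] at hprod
  have hW : ((weight W d : ℕ) : ℕ∞) < weight W e + 1 := by
    rw [weight_const_add, weight_const_add, hdeg]
    exact_mod_cast Nat.lt_succ_of_le (Nat.add_le_add_left hwt _)
  have hcoeff := coeff_eq_zero_of_lt_weightedOrder W (hW.trans_le hprod)
  rwa [map_sub, sub_eq_zero, coeff_monomial] at hcoeff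

end MvComp

section FreeOf

variable {σ R : Type*} [CommSemiring R]

def freeOf (t : Set σ) : Subsemiring (MvPowerSeries σ R) where
  carrier := {p | ∀ d : σ →₀ ℕ, (∃ k ∈ t, d k ≠ 0) → coeff d p = 0}
  mul_mem' {p q} hp hq d hd := by
    classical
    obtain ⟨k, hk, hdk⟩ := hd
    rw [coeff_mul]
    refine Finset.sum_eq_zero fun x hx => ?_
    rw [Finset.HasAntidiagonal.mem_antidiagonal] at hx
    by_cases hx1 : x.1 k = 0
    · have : x.2 k ≠ 0 := by simpa [← hx, hx1] using hdk
      rw [hq x.2 ⟨k, hk, this⟩, mul_zero]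
    · rw [hp x.1 ⟨k, hk, hx1⟩, zero_mul]
  one_mem' d hd := by
    classical
    obtain ⟨k, -, hdk⟩ := hd
    rw [coeff_one, if_neg fun h => hdk (by simp [h])]
  add_mem' {p q} hp hq d hd := by rw [map_add, hp d hd, hq d hd, add_zero]
  zero_mem' d _ := map_zero _

theorem X_mem_freeOf {t : Set σ} {k : σ} (hk : k ∉ t) : (X k : MvPowerSeries σ R) ∈ freeOf t := by
  classical
  rintro d ⟨k', hk', hdk'⟩
  rw [coeff_X, if_neg]
  rintro rfl
  rw [single_apply] at hdk'
  split_ifs at hdk' with h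
  · exact hk (h ▸ hk')
  · exact hdk' rfl

theorem mvComp_mem_freeOf {R : Type*} [CommRing R] {n : ℕ} {t : Set (Fin n)}
    (h : MvPowerSeries (Fin n) R) {u : Fin n → MvPowerSeries (Fin n) R}
    (hu : ∀ j, u j ∈ freeOf t) : mvComp h u ∈ freeOf t := fun d hd =>
  Finset.sum_eq_zero fun e _ => by
    rw [(prod_mem fun j _ => pow_mem (hu j) _ : ∏ j, u j ^ e j ∈ freeOf t) d hd, mul_zero]

end FreeOf

section Graph

variable {R : Type*} [CommRing R] {n : ℕ} {r : ℕ}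

def IsFreeMonomial (r : ℕ) (d : Fin n →₀ ℕ) : Prop :=
  2 ≤ degree d ∧ ∀ k : Fin n, (k : ℕ) < r → d k = 0

theorem IsFreeMonomial.ne_zero {d : Fin n →₀ ℕ} (hd : IsFreeMonomial r d) : d ≠ 0 := by
  rintro rfl
  simp [IsFreeMonomial] at hd

/-- The subvariety `xᵢ = fᵢ`, `i < r`, with the coordinates `xᵢ`, `i ≥ r`, in the remaining
slots, so that `mvComp h f` is `h` restricted to the subvariety. -/
def IsGraph (r : ℕ) (f : Fin n → MvPowerSeries (Fin n) R) : Prop :=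
  (∀ i : Fin n, (i : ℕ) < r →
      coeff 0 (f i) = 0 ∧ (∀ j : Fin n, coeff (single j 1) (f i) = 0) ∧
        f i ∈ freeOf {k : Fin n | (k : ℕ) < r}) ∧
    ∀ i : Fin n, r ≤ (i : ℕ) → f i = X i

theorem eq_single_of_not_isFreeMonomial {d : Fin n →₀ ℕ} (hd : ¬IsFreeMonomial r d) :
    (∃ k : Fin n, (k : ℕ) < r ∧ d k ≠ 0) ∨ d = 0 ∨ ∃ k : Fin n, r ≤ (k : ℕ) ∧ d = single k 1 := by
  by_cases htouch : ∃ k : Fin n, (k : ℕ) < r ∧ d k ≠ 0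
  · exact .inl htouch
  push Not at htouch
  have : degree d ≤ 1 := by
    by_contra! h2
    exact hd ⟨h2, htouch⟩
  rcases degree_le_one_iff.mp this with rfl | ⟨k, rfl⟩
  · exact .inr (.inl rfl)
  · refine .inr (.inr ⟨k, not_lt.mp fun hk => ?_, rfl⟩)
    simpa using htouch k hk

namespace IsGraph

variable {f : Fin n → MvPowerSeries (Fin n) R}

theorem coeff_zero (hf : IsGraph r f) (j : Fin n) : coeff 0 (f j) = 0 := by
  rcases lt_or_ge (j : ℕ) r with hj | hj
  · exact (hf.1 j hj).1
  · rw [hf.2 j hj, coeff_zero_X]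

theorem mem_freeOf (hf : IsGraph r f) (j : Fin n) : f j ∈ freeOf {k : Fin n | (k : ℕ) < r} := by
  rcases lt_or_ge (j : ℕ) r with hj | hj
  · exact (hf.1 j hj).2.2
  · exact hf.2 j hj ▸ X_mem_freeOf (by simpa using hj)

theorem coeff_eq_zero_of_not_isFreeMonomial (hf : IsGraph r f) {i : Fin n} (hi : (i : ℕ) < r)
    {d : Fin n →₀ ℕ} (hd : ¬IsFreeMonomial r d) : coeff d (f i) = 0 := by
  rcases eq_single_of_not_isFreeMonomial hd with htouch | rfl | ⟨k, -, rfl⟩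
  · exact (hf.1 i hi).2.2 d htouch
  · exact (hf.1 i hi).1
  · exact (hf.1 i hi).2.1 k

theorem coeff_single_mvComp (hf : IsGraph r f) (h : MvPowerSeries (Fin n) R) (k : Fin n) :
    coeff (single k 1) (mvComp h f) = if r ≤ (k : ℕ) then coeff (single k 1) h else 0 := by
  have hX : ∀ j : Fin n, r ≤ (j : ℕ) → coeff (single k 1) (f j) = if k = j then 1 else 0 :=
    fun j hj => by simp [hf.2 j hj, coeff_X, single_left_inj one_ne_zero]
  rw [FormalInvariantGraph.coeff_single_mvComp h hf.coeff_zero,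
    Finset.sum_eq_single k (fun j _ hjk => ?_) (by simp)]
  · split_ifs with hk
    · rw [hX k hk, if_pos rfl, mul_one]
    · rw [(hf.1 k (not_le.mp hk)).2.1 k, mul_zero]
  · rcases lt_or_ge (j : ℕ) r with hj | hj
    · rw [(hf.1 j hj).2.1 k, mul_zero]
    · rw [hX j hj, if_neg (Ne.symm hjk), mul_zero]

end IsGraph

noncomputable def graphOf (r : ℕ) (c : Fin n → (Fin n →₀ ℕ) → R) :
    Fin n → MvPowerSeries (Fin n) R :=
  fun i => if (i : ℕ) < r then (c i : MvPowerSeries (Fin n) R) else X i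

theorem coeff_graphOf_of_lt {c : Fin n → (Fin n →₀ ℕ) → R} {i : Fin n} (hi : (i : ℕ) < r)
    (d : Fin n →₀ ℕ) : coeff d (graphOf r c i) = c i d := by
  have : graphOf r c i = (c i : MvPowerSeries (Fin n) R) := if_pos hi
  rw [this]
  rfl

theorem graphOf_of_le {c : Fin n → (Fin n →₀ ℕ) → R} {i : Fin n} (hi : r ≤ (i : ℕ)) :
    graphOf r c i = X i :=
  if_neg (not_lt.mpr hi)

theorem isGraph_graphOf {c : Fin n → (Fin n →₀ ℕ) → R}
    (hc : ∀ i : Fin n, (i : ℕ) < r → ∀ d, ¬IsFreeMonomial r d → c i d = 0) :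
    IsGraph r (graphOf r c) := by
  refine ⟨fun i hi => ?_, fun i hi => graphOf_of_le hi⟩
  simp only [coeff_graphOf_of_lt hi]
  refine ⟨hc i hi 0 fun h => ?_, fun j => hc i hi _ fun h => ?_, fun d ⟨k, hk, hdk⟩ => ?_⟩
  · simpa using h.1
  · simpa using h.1
  · rw [coeff_graphOf_of_lt hi]
    exact hc i hi d fun h => hdk (h.2 k hk)

end Graph

section Defect

variable {R : Type*} [CommRing R] {n r : ℕ}

/-- The order in which the coefficients `c_{i,d}` are solved for. -/
noncomputable def coeffKey (r : ℕ) (i : Fin n) (d : Fin n →₀ ℕ) : ℕ ×ₗ ℕ ×ₗ ℕ :=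
  toLex (degree d, toLex (r - i, weight (fun k : Fin n => (k : ℕ)) d))

theorem coeffKey_lt_of_degree_lt {i j : Fin n} {d e : Fin n →₀ ℕ} (h : degree e < degree d) :
    coeffKey r j e < coeffKey r i d :=
  Prod.Lex.toLex_lt_toLex.mpr (.inl h)

theorem coeffKey_lt_of_lt {i j : Fin n} (hi : (i : ℕ) < r) (hij : i < j) (d : Fin n →₀ ℕ) :
    coeffKey r j d < coeffKey r i d :=
  Prod.Lex.toLex_lt_toLex.mpr (.inr ⟨rfl, Prod.Lex.toLex_lt_toLex.mpr (.inl (by omega))⟩)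

theorem coeffKey_lt_of_weight_lt (i : Fin n) {d e : Fin n →₀ ℕ} (hdeg : degree e = degree d)
    (hwt : weight (fun k : Fin n => (k : ℕ)) e < weight (fun k : Fin n => (k : ℕ)) d) :
    coeffKey r i e < coeffKey r i d :=
  Prod.Lex.toLex_lt_toLex.mpr (.inr ⟨hdeg, Prod.Lex.toLex_lt_toLex.mpr (.inr ⟨rfl, hwt⟩)⟩)

structure IsTriangularGerm (φ : Fin n → MvPowerSeries (Fin n) R) (l : Fin n → R) : Prop where
  coeff_zero : ∀ i, coeff 0 (φ i) = 0
  coeff_single_self : ∀ i, coeff (single i 1) (φ i) = l i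
  coeff_single_of_lt : ∀ i j, j < i → coeff (single j 1) (φ i) = 0

noncomputable def invarianceDefect (φ f : Fin n → MvPowerSeries (Fin n) R) (i : Fin n)
    (d : Fin n →₀ ℕ) : R :=
  coeff d (mvComp (φ i) f) - coeff d (mvComp (f i) fun j => mvComp (φ j) f)

variable {φ : Fin n → MvPowerSeries (Fin n) R} {l : Fin n → R}

theorem coeff_mvComp_sub_mvComp_of_triangular (hφ : IsTriangularGerm φ l)
    {f g : Fin n → MvPowerSeries (Fin n) R} (hf : ∀ j, coeff 0 (f j) = 0)
    (hg : ∀ j, coeff 0 (g j) = 0) (i : Fin n) {d : Fin n →₀ ℕ} (hd : d ≠ 0)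
    (hlow : ∀ j, ((degree d : ℕ) : ℕ∞) ≤ (f j - g j).order)
    (hlater : ∀ j, i < j → coeff d (f j) = coeff d (g j)) :
    coeff d (mvComp (φ i) f) - coeff d (mvComp (φ i) g) =
      l i * (coeff d (f i) - coeff d (g i)) := by
  rw [coeff_mvComp_sub_mvComp_of_le_order _ hf hg hd hlow,
    Finset.sum_eq_single i (fun j _ hji => ?_) (by simp), hφ.coeff_single_self]
  rcases lt_or_gt_of_ne hji with hj | hj
  · rw [hφ.coeff_single_of_lt i j hj, zero_mul]
  · rw [hlater j hj, sub_self, mul_zero]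

theorem coeff_mvComp_sub_mvComp_of_isGraph (hφ : IsTriangularGerm φ l)
    {f g : Fin n → MvPowerSeries (Fin n) R} (hf : IsGraph r f) (hg : IsGraph r g) {i : Fin n}
    (hi : (i : ℕ) < r) {d : Fin n →₀ ℕ} (hd : IsFreeMonomial r d)
    (hlow : ∀ j, ((degree d : ℕ) : ℕ∞) ≤ (f j - g j).order)
    (hsame : ∀ e, coeffKey r i e < coeffKey r i d → coeff e (f i) = coeff e (g i)) :
    coeff d (mvComp (f i) fun j => mvComp (φ j) f) -
        coeff d (mvComp (g i) fun j => mvComp (φ j) g) =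
      (∏ j, l j ^ d j) * (coeff d (f i) - coeff d (g i)) := by
  have hψf : ∀ j, coeff 0 (mvComp (φ j) f) = 0 := fun j =>
    (coeff_zero_mvComp _ _).trans (hφ.coeff_zero j)
  have hψg : ∀ j, coeff 0 (mvComp (φ j) g) = 0 := fun j =>
    (coeff_zero_mvComp _ _).trans (hφ.coeff_zero j)
  have htri : ∀ j k : Fin n, k < j → coeff (single k 1) (mvComp (φ j) f) = 0 := fun j k hkj => by
    rw [hf.coeff_single_mvComp, hφ.coeff_single_of_lt j k hkj, ite_self]
  have hg₁ : ∀ e : Fin n →₀ ℕ, degree e ≤ 1 → coeff e (g i) = 0 := fun e he => by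
    rcases degree_le_one_iff.mp he with rfl | ⟨k, rfl⟩
    exacts [(hg.1 i hi).1, (hg.1 i hi).2.1 k]
  rw [coeff_mvComp_sub_mvComp_of_coeff_eq_zero _ _ hψf hψg hg₁ hd.ne_zero
      fun j => le_order_mvComp_sub_mvComp _ hf.coeff_zero hg.coeff_zero hlow,
    Finset.sum_eq_single_of_mem d (mem_Iic_iff_le_degree.mpr (le_degree · d)) fun e _ hne => ?_]
  · rw [coeff_prod_pow_of_upperTriangular hψf htri rfl le_rfl, if_pos rfl, mul_comm]
    congr 1
    refine Finset.prod_congr rfl fun j _ => ?_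
    rcases lt_or_ge (j : ℕ) r with hj | hj
    · rw [hd.2 j hj, pow_zero, pow_zero]
    · rw [hf.coeff_single_mvComp, if_pos hj, hφ.coeff_single_self]
  rcases lt_trichotomy (degree e) (degree d) with hlt | heq | hgt
  · rw [hsame e (coeffKey_lt_of_degree_lt hlt), sub_self, zero_mul]
  · rcases lt_or_ge (weight (fun k : Fin n => (k : ℕ)) e) (weight (fun k : Fin n => (k : ℕ)) d)
      with hw | hw
    · rw [hsame e (coeffKey_lt_of_weight_lt i heq hw), sub_self, zero_mul]
    · rw [coeff_prod_pow_of_upperTriangular hψf htri heq.symm hw, if_neg (Ne.symm hne), mul_zero]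
  · rw [coeff_prod_pow_eq_zero_of_degree_lt hψf hgt, mul_zero]

theorem invarianceDefect_sub_invarianceDefect (hφ : IsTriangularGerm φ l)
    {f g : Fin n → MvPowerSeries (Fin n) R} (hf : IsGraph r f) (hg : IsGraph r g) {i : Fin n}
    (hi : (i : ℕ) < r) {d : Fin n →₀ ℕ} (hd : IsFreeMonomial r d)
    (hagree : ∀ j e, coeffKey r j e < coeffKey r i d → coeff e (f j) = coeff e (g j)) :
    invarianceDefect φ f i d - invarianceDefect φ g i d =
      (l i - ∏ j, l j ^ d j) * (coeff d (f i) - coeff d (g i)) := by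
  have hlow : ∀ j, ((degree d : ℕ) : ℕ∞) ≤ (f j - g j).order := fun j =>
    nat_le_order fun e he => by rw [map_sub, hagree j e (coeffKey_lt_of_degree_lt he), sub_self]
  have hlater : ∀ j, i < j → coeff d (f j) = coeff d (g j) := fun j hij => by
    rcases lt_or_ge (j : ℕ) r with hj | hj
    · exact hagree j d (coeffKey_lt_of_lt hi hij d)
    · rw [hf.2 j hj, hg.2 j hj]
  have h₁ := coeff_mvComp_sub_mvComp_of_triangular hφ hf.coeff_zero hg.coeff_zero i hd.ne_zero
    hlow hlater
  have h₂ := coeff_mvComp_sub_mvComp_of_isGraph hφ hf hg hi hd hlow fun e => hagree i e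
  unfold invarianceDefect
  linear_combination h₁ - h₂

def IsInvariant (r : ℕ) (φ f : Fin n → MvPowerSeries (Fin n) R) : Prop :=
  ∀ i : Fin n, (i : ℕ) < r → mvComp (φ i) f = mvComp (f i) fun j => mvComp (φ j) f

theorem IsInvariant.invarianceDefect_eq_zero {f : Fin n → MvPowerSeries (Fin n) R}
    (hf : IsInvariant r φ f) {i : Fin n} (hi : (i : ℕ) < r) (d : Fin n →₀ ℕ) :
    invarianceDefect φ f i d = 0 :=
  sub_eq_zero.mpr (congrArg (coeff d) (hf i hi))

theorem invarianceDefect_eq_zero_of_not_isFreeMonomial (hφ : ∀ i, coeff 0 (φ i) = 0)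
    (hcoupling : ∀ i k : Fin n, (i : ℕ) < r → r ≤ (k : ℕ) → coeff (single k 1) (φ i) = 0)
    {f : Fin n → MvPowerSeries (Fin n) R} (hf : IsGraph r f) {i : Fin n} (hi : (i : ℕ) < r)
    {d : Fin n →₀ ℕ} (hd : ¬IsFreeMonomial r d) : invarianceDefect φ f i d = 0 := by
  rcases eq_single_of_not_isFreeMonomial hd with htouch | rfl | ⟨k, hk, rfl⟩
  · rw [invarianceDefect, mvComp_mem_freeOf _ hf.mem_freeOf d htouch,
      mvComp_mem_freeOf _ (fun j => mvComp_mem_freeOf _ hf.mem_freeOf) d htouch, sub_zero]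
  · rw [invarianceDefect, coeff_zero_mvComp, coeff_zero_mvComp, hφ i, (hf.1 i hi).1, sub_zero]
  · rw [invarianceDefect, hf.coeff_single_mvComp, if_pos hk, hcoupling i k hi hk,
      coeff_single_mvComp _ fun j => (coeff_zero_mvComp _ _).trans (hφ j)]
    simp [(hf.1 i hi).2.1]

def NonResonant (r : ℕ) (l : Fin n → R) : Prop :=
  ∀ i : Fin n, (i : ℕ) < r → ∀ α : Fin n →₀ ℕ,
    (∀ j : Fin n, (j : ℕ) < r → α j = 0) → α ≠ 0 → l i ≠ ∏ j, l j ^ α j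

theorem NonResonant.sub_ne_zero (hl : NonResonant r l) {i : Fin n} (hi : (i : ℕ) < r)
    {d : Fin n →₀ ℕ} (hd : IsFreeMonomial r d) : l i - ∏ j, l j ^ d j ≠ 0 :=
  _root_.sub_ne_zero.mpr (hl i hi d hd.2 hd.ne_zero)

theorem coeff_single_eq_zero_of_nonResonant
    (hoff : ∀ i j : Fin n, (j : ℕ) ≠ i → (j : ℕ) ≠ i + 1 → coeff (single j 1) (φ i) = 0)
    (hjordan : ∀ i j : Fin n, (j : ℕ) = i + 1 →
      coeff (single j 1) (φ i) = 0 ∨ (coeff (single j 1) (φ i) = 1 ∧ l i = l j))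
    (hl : NonResonant r l) {i k : Fin n} (hi : (i : ℕ) < r) (hk : r ≤ (k : ℕ)) :
    coeff (single k 1) (φ i) = 0 := by
  by_cases hki : (k : ℕ) = i + 1
  · refine (hjordan i k hki).resolve_right fun h => hl i hi (single k 1) ?_
      (single_ne_zero.mpr one_ne_zero) (by rw [prod_pow_single_one, h.2])
    intro j hj
    rw [single_apply, if_neg (by omega)]
  · exact hoff i k (by omega) hki

end Defect

section Solution

-- makes `termination_by coeffKey r i d` decrease along `<` on `ℕ ×ₗ ℕ ×ₗ ℕ`
attribute [local instance] WellFoundedLT.toWellFoundedRelation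

variable {F : Type*} [Field F] {n r : ℕ} {φ : Fin n → MvPowerSeries (Fin n) F} {l : Fin n → F}

variable (r φ l) in
open Classical in
/-- The recursive calls fill in the coefficients preceding `(i, d)`. The `(i, d)` coefficient of
this truncation is `0`, so by `invarianceDefect_sub_invarianceDefect` the value below kills the
`(i, d)` defect of the full solution. -/
noncomputable def solutionCoeff (i : Fin n) (d : Fin n →₀ ℕ) : F :=
  if (i : ℕ) < r ∧ IsFreeMonomial r d then
    -(l i - ∏ j, l j ^ d j)⁻¹ * invarianceDefect φ
      (graphOf r fun j e => if coeffKey r j e < coeffKey r i d then solutionCoeff j e else 0) i d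
  else 0
termination_by coeffKey r i d
decreasing_by assumption

variable (r φ l) in
noncomputable def truncatedSolution (i : Fin n) (d : Fin n →₀ ℕ) :
    Fin n → MvPowerSeries (Fin n) F :=
  graphOf r fun j e => if coeffKey r j e < coeffKey r i d then solutionCoeff r φ l j e else 0

variable (r φ l) in
noncomputable def solution : Fin n → MvPowerSeries (Fin n) F :=
  graphOf r (solutionCoeff r φ l)

theorem solutionCoeff_of_isFreeMonomial {i : Fin n} (hi : (i : ℕ) < r) {d : Fin n →₀ ℕ}
    (hd : IsFreeMonomial r d) :
    solutionCoeff r φ l i d =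
      -(l i - ∏ j, l j ^ d j)⁻¹ * invarianceDefect φ (truncatedSolution r φ l i d) i d := by
  rw [solutionCoeff, if_pos ⟨hi, hd⟩]
  rfl

theorem solutionCoeff_of_not_isFreeMonomial (i : Fin n) {d : Fin n →₀ ℕ}
    (hd : ¬IsFreeMonomial r d) : solutionCoeff r φ l i d = 0 := by
  rw [solutionCoeff, if_neg fun h => hd h.2]

theorem isGraph_solution : IsGraph r (solution r φ l) :=
  isGraph_graphOf fun i _ _ hd => solutionCoeff_of_not_isFreeMonomial i hd

theorem isGraph_truncatedSolution (i : Fin n) (d : Fin n →₀ ℕ) :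
    IsGraph r (truncatedSolution r φ l i d) :=
  isGraph_graphOf fun j _ e he => by
    split_ifs
    exacts [solutionCoeff_of_not_isFreeMonomial j he, rfl]

theorem invarianceDefect_solution_of_isFreeMonomial (hφ : IsTriangularGerm φ l)
    (hl : NonResonant r l) {i : Fin n} (hi : (i : ℕ) < r) {d : Fin n →₀ ℕ}
    (hd : IsFreeMonomial r d) : invarianceDefect φ (solution r φ l) i d = 0 := by
  have h := invarianceDefect_sub_invarianceDefect hφ (isGraph_solution (φ := φ) (l := l))
    (isGraph_truncatedSolution i d) hi hd fun j e he => by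
      rcases lt_or_ge (j : ℕ) r with hj | hj
      · rw [solution, truncatedSolution, coeff_graphOf_of_lt hj, coeff_graphOf_of_lt hj, if_pos he]
      · rw [solution, truncatedSolution, graphOf_of_le hj, graphOf_of_le hj]
  have hsol : coeff d (solution r φ l i) = solutionCoeff r φ l i d := by
    rw [solution, coeff_graphOf_of_lt hi]
  have htr : coeff d (truncatedSolution r φ l i d i) = 0 := by
    rw [truncatedSolution, coeff_graphOf_of_lt hi, if_neg (lt_irrefl _)]
  rw [hsol, htr, solutionCoeff_of_isFreeMonomial hi hd, sub_zero, ← mul_assoc, mul_neg,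
    mul_inv_cancel₀ (hl.sub_ne_zero hi hd)] at h
  linear_combination h

theorem isInvariant_solution (hφ : IsTriangularGerm φ l)
    (hcoupling : ∀ i k : Fin n, (i : ℕ) < r → r ≤ (k : ℕ) → coeff (single k 1) (φ i) = 0)
    (hl : NonResonant r l) : IsInvariant r φ (solution r φ l) := fun i hi =>
  MvPowerSeries.ext fun d => sub_eq_zero.mp <| by
    by_cases hd : IsFreeMonomial r d
    · exact invarianceDefect_solution_of_isFreeMonomial hφ hl hi hd
    · exact invarianceDefect_eq_zero_of_not_isFreeMonomial hφ.coeff_zero hcoupling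
        isGraph_solution hi hd

theorem coeff_eq_of_isInvariant (hφ : IsTriangularGerm φ l) (hl : NonResonant r l)
    {f g : Fin n → MvPowerSeries (Fin n) F} (hf : IsGraph r f) (hg : IsGraph r g)
    (hfφ : IsInvariant r φ f) (hgφ : IsInvariant r φ g) (i : Fin n) (d : Fin n →₀ ℕ) :
    coeff d (f i) = coeff d (g i) := by
  rcases lt_or_ge (i : ℕ) r with hi | hi
  · by_cases hd : IsFreeMonomial r d
    · have h := invarianceDefect_sub_invarianceDefect hφ hf hg hi hd fun j e _ =>
        coeff_eq_of_isInvariant hφ hl hf hg hfφ hgφ j e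
      rw [hfφ.invarianceDefect_eq_zero hi, hgφ.invarianceDefect_eq_zero hi, sub_zero] at h
      exact sub_eq_zero.mp ((mul_eq_zero.mp h.symm).resolve_left (hl.sub_ne_zero hi hd))
    · rw [hf.coeff_eq_zero_of_not_isFreeMonomial hi hd,
        hg.coeff_eq_zero_of_not_isFreeMonomial hi hd]
  · rw [hf.2 i hi, hg.2 i hi]
termination_by coeffKey r i d
decreasing_by assumption

theorem eq_of_isInvariant (hφ : IsTriangularGerm φ l) (hl : NonResonant r l)
    {f g : Fin n → MvPowerSeries (Fin n) F} (hf : IsGraph r f) (hg : IsGraph r g)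
    (hfφ : IsInvariant r φ f) (hgφ : IsInvariant r φ g) : f = g :=
  funext fun i => MvPowerSeries.ext fun d => coeff_eq_of_isInvariant hφ hl hf hg hfφ hgφ i d

end Solution

end FormalInvariantGraph

open FormalInvariantGraph in
theorem stmt14_general (F : Type*) [Field F] (n r : ℕ)
    (φ : Fin n → MvPowerSeries (Fin n) F) (l : Fin n → F)
    (hconst : ∀ i, MvPowerSeries.coeff 0 (φ i) = 0)
    (hdiag : ∀ i : Fin n, MvPowerSeries.coeff (Finsupp.single i 1) (φ i) = l i)
    (hoff : ∀ i j : Fin n, (j : ℕ) ≠ (i : ℕ) → (j : ℕ) ≠ (i : ℕ) + 1 →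
      MvPowerSeries.coeff (Finsupp.single j 1) (φ i) = 0)
    (hjordan : ∀ i j : Fin n, (j : ℕ) = (i : ℕ) + 1 →
      MvPowerSeries.coeff (Finsupp.single j 1) (φ i) = 0 ∨
      (MvPowerSeries.coeff (Finsupp.single j 1) (φ i) = 1 ∧ l i = l j))
    (hsemi : ∀ i : Fin n, (i : ℕ) < r → ∀ α : Fin n →₀ ℕ,
      (∀ j : Fin n, (j : ℕ) < r → α j = 0) → α ≠ 0 → l i ≠ ∏ j, l j ^ α j) :
    ∃! f : Fin n → MvPowerSeries (Fin n) F,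
      (∀ i : Fin n, (i : ℕ) < r →
          MvPowerSeries.coeff 0 (f i) = 0 ∧
          (∀ j : Fin n, MvPowerSeries.coeff (Finsupp.single j 1) (f i) = 0) ∧
          (∀ d : Fin n →₀ ℕ, (∃ j : Fin n, (j : ℕ) < r ∧ d j ≠ 0) →
            MvPowerSeries.coeff d (f i) = 0)) ∧
      (∀ i : Fin n, r ≤ (i : ℕ) → f i = MvPowerSeries.X i) ∧
      (∀ i : Fin n, (i : ℕ) < r →
        mvComp (φ i) f = mvComp (f i) (fun j => mvComp (φ j) f)) := by
  have hφ : IsTriangularGerm φ l := ⟨hconst, hdiag, fun i j hji => hoff i j (by omega) (by omega)⟩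
  have hinv : IsInvariant r φ (solution r φ l) := isInvariant_solution hφ
    (fun _ _ hi hk => coeff_single_eq_zero_of_nonResonant hoff hjordan hsemi hi hk) hsemi
  obtain ⟨hgraph₁, hgraph₂⟩ := isGraph_solution (r := r) (φ := φ) (l := l)
  refine ⟨solution r φ l, ⟨hgraph₁, hgraph₂, hinv⟩, ?_⟩
  rintro g ⟨hg₁, hg₂, hgφ⟩
  exact eq_of_isInvariant hφ hsemi ⟨hg₁, hg₂⟩ ⟨hgraph₁, hgraph₂⟩ hgφ hinv

/-- Existence and uniqueness of the fixed formal subvariety `{xᵢ = fᵢ(x_{r+1},…,xₙ)}`: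
if `φ = (φ₁,…,φₙ)` has zero constant terms, linear part in Jordan canonical form with
multipliers `λ₁,…,λₙ`, and each `λᵢ` (`i ≤ r`) is not in the multiplicative semigroup
generated by `λ_{r+1},…,λₙ`, then there are unique formal power series
`fᵢ(x_{r+1},…,xₙ)` (`i ≤ r`), with zero constant and linear terms, such that the formal
subvariety `xᵢ = fᵢ` is invariant:
`φᵢ(f,x_{>r}) = fᵢ(φ_{r+1}(f,x_{>r}),…,φₙ(f,x_{>r}))`. -/
theorem stmt14 (F : Type*) [Field F] (n r : ℕ) (hr : r ≤ n)
    (φ : Fin n → MvPowerSeries (Fin n) F) (l : Fin n → F)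
    (hconst : ∀ i, MvPowerSeries.coeff 0 (φ i) = 0)
    (hdiag : ∀ i : Fin n, MvPowerSeries.coeff (Finsupp.single i 1) (φ i) = l i)
    (hoff : ∀ i j : Fin n, (j : ℕ) ≠ (i : ℕ) → (j : ℕ) ≠ (i : ℕ) + 1 →
      MvPowerSeries.coeff (Finsupp.single j 1) (φ i) = 0)
    (hjordan : ∀ i j : Fin n, (j : ℕ) = (i : ℕ) + 1 →
      MvPowerSeries.coeff (Finsupp.single j 1) (φ i) = 0 ∨
      (MvPowerSeries.coeff (Finsupp.single j 1) (φ i) = 1 ∧ l i = l j))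
    (hsemi : ∀ i : Fin n, (i : ℕ) < r → ∀ α : Fin n →₀ ℕ,
      (∀ j : Fin n, (j : ℕ) < r → α j = 0) → α ≠ 0 → l i ≠ ∏ j, l j ^ α j) :
    ∃! f : Fin n → MvPowerSeries (Fin n) F,
      (∀ i : Fin n, (i : ℕ) < r →
          MvPowerSeries.coeff 0 (f i) = 0 ∧
          (∀ j : Fin n, MvPowerSeries.coeff (Finsupp.single j 1) (f i) = 0) ∧
          (∀ d : Fin n →₀ ℕ, (∃ j : Fin n, (j : ℕ) < r ∧ d j ≠ 0) →
            MvPowerSeries.coeff d (f i) = 0)) ∧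
      (∀ i : Fin n, r ≤ (i : ℕ) → f i = MvPowerSeries.X i) ∧
      (∀ i : Fin n, (i : ℕ) < r →
        mvComp (φ i) f = mvComp (f i) (fun j => mvComp (φ j) f)) :=
  stmt14_general F n r φ l hconst hdiag hoff hjordan hsemi
end

section
/- Let F be a complete nonarchimedean valued field and φ = (φ_1,…,φ_n) formal power series with zero constant terms and all coefficients of absolute value at most 1, whose linear part is diagonal with multipliers λ_1,…,λ_n satisfying |λ_i| < 1 for i ≤ r and |λ_i| = 1 for i > r. Suppose further that the subvariety V = {x_1 = ⋯ = x_r = 0} is invariant under φ (i.e. φ_i vanishes identically on V for i ≤ r). Then there exists 0 < c < 1 such that for every z = (z_1,…,z_n) with all |z_i| ≤ c and at least one z_i ≠ 0 for i ≤ r: max_{i ≤ r} |φ_{i,k}(z)| → 0 as k → ∞, where φ^k = (φ_{1,k},…,φ_{n,k}) is the k-th iterate; in particular no such z is periodic. -/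
/-!
On the closed polydisk of radius `c ≤ 1` every monomial of degree `m ≥ 1` has norm at most
`c ^ m`, so by the ultrametric inequality `φ` maps the polydisk into itself. For `i < r` the
invariance of `V` forces every monomial of `φᵢ` of degree `≥ 2` to contain some attracting
variable `x_j`, `j < r`, which makes it at most `c · max_{j<r} ‖x_j‖`, while the linear term is
`λᵢ xᵢ`. Hence `max_{j<r} ‖x_j‖` shrinks by the factor `max(c, max_{i<r} ‖λᵢ‖) < 1` at every
step, and a periodic point would have to lie in `V`.
-/

open Filter Function Set Topology

lemma exists_lt_one_forall_le {ι : Type*} [Finite ι] {p : ι → Prop} {f : ι → ℝ}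
    (h : ∀ i, p i → f i < 1) : ∃ μ < 1, ∀ i, p i → f i ≤ μ := by
  have hev : ∀ᶠ μ in 𝓝[<] (1 : ℝ), μ < 1 ∧ ∀ i, p i → f i ≤ μ := by
    refine (eventually_mem_nhdsWithin (s := Iio 1)).and (eventually_all.2 fun i => ?_)
    by_cases hp : p i
    · exact ((eventually_gt_nhds (h i hp)).filter_mono nhdsWithin_le_nhds).mono
        fun μ hμ _ => hμ.le
    · exact Eventually.of_forall fun _ hp' => absurd hp' hp
  exact hev.exists

lemma Finsupp.exists_eq_single_of_degree_eq_one {σ : Type*} {d : σ →₀ ℕ}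
    (h : d.degree = 1) : ∃ j, d = single j 1 := by
  obtain ⟨j, hj⟩ : ∃ j, d j ≠ 0 := by
    by_contra! hd
    simp [show d = 0 from Finsupp.ext hd] at h
  have hsplit := (sub_add_single_one_cancel hj).symm
  have hrest : (d - single j 1).degree = 0 := by
    rw [hsplit, map_add, degree_single] at h
    omega
  rw [degree_eq_zero_iff] at hrest
  exact ⟨j, by rw [hsplit, hrest, zero_add]⟩

lemma Function.iterate_mem_of_mapsTo {X M : Type*} [Monoid M] {f : X → X} {P : M → Set X}
    {q : M} (h : ∀ B, MapsTo f (P B) (P (q * B))) {x : X} {B : M} (hx : x ∈ P B) :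
    ∀ k : ℕ, f^[k] x ∈ P (q ^ k * B)
  | 0 => by simpa using hx
  | k + 1 => by
    rw [iterate_succ_apply', pow_succ', mul_assoc]
    exact h _ (iterate_mem_of_mapsTo h hx k)

lemma Function.IsPeriodicPt.eq_of_tendsto {X Y : Type*} [TopologicalSpace Y] [T2Space Y]
    {f : X → X} {k : ℕ} {x : X} (hx : IsPeriodicPt f k x) (hk : 0 < k) {g : X → Y} {y : Y}
    (h : Tendsto (fun m => g (f^[m] x)) atTop (𝓝 y)) : g x = y := by
  have hsub := h.comp (tendsto_id.const_mul_atTop' hk)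
  have hconst : (fun m => g (f^[m] x)) ∘ (fun m => k * id m) = fun _ => g x :=
    funext fun m => by simp [(hx.mul_const m).eq]
  rw [hconst] at hsub
  exact tendsto_const_nhds_iff.1 hsub

section Monomials

variable {F ι : Type*} [NormedField F] [Fintype ι] {w : ι → F} {c : ℝ}

lemma norm_prod_pow_le_pow_degree (hw : ∀ k, ‖w k‖ ≤ c) (d : ι →₀ ℕ) :
    ‖∏ k, w k ^ d k‖ ≤ c ^ d.degree := by
  rw [norm_prod, Finsupp.degree_eq_sum, ← Finset.prod_pow_eq_pow_sum]
  refine Finset.prod_le_prod (fun k _ => norm_nonneg _) fun k _ => ?_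
  rw [norm_pow]
  exact pow_le_pow_left₀ (norm_nonneg _) (hw k) _

lemma norm_prod_pow_le_norm_mul_pow (hw : ∀ k, ‖w k‖ ≤ c) {d : ι →₀ ℕ} {j : ι}
    (hj : d j ≠ 0) : ‖∏ k, w k ^ d k‖ ≤ ‖w j‖ * c ^ (d.degree - 1) := by
  set d' := d - Finsupp.single j 1
  have hd : d = d' + Finsupp.single j 1 := (Finsupp.sub_add_single_one_cancel hj).symm
  have hsingle : ∏ k, w k ^ Finsupp.single j 1 k = w j := by
    rw [Fintype.prod_eq_single j fun k hk => by simp [Finsupp.single_eq_of_ne hk]]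
    simp
  have hprod : ∏ k, w k ^ d k = w j * ∏ k, w k ^ d' k := by
    conv_lhs => rw [hd]
    simp only [Finsupp.coe_add, Pi.add_apply, pow_add, Finset.prod_mul_distrib, hsingle]
    exact mul_comm _ _
  have hdeg : d.degree - 1 = d'.degree := by
    rw [hd, map_add, Finsupp.degree_single, Nat.add_sub_cancel]
  rw [hprod, norm_mul, hdeg]
  exact mul_le_mul_of_nonneg_left (norm_prod_pow_le_pow_degree hw d') (norm_nonneg _)

end Monomials

section Series

variable {F ι : Type*} [NormedField F] [IsUltrametricDist F] [Fintype ι]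
  {b : (ι →₀ ℕ) → F} {w : ι → F} {c : ℝ}

lemma norm_tsum_le_of_closedPolydisk (hb : ∀ d, ‖b d‖ ≤ 1) (hb0 : b 0 = 0) (hc0 : 0 ≤ c)
    (hc1 : c ≤ 1) (hw : ∀ k, ‖w k‖ ≤ c) : ‖∑' d, b d * ∏ k, w k ^ d k‖ ≤ c := by
  refine IsUltrametricDist.norm_tsum_le_of_forall_le_of_nonneg hc0 fun d => ?_
  rcases eq_or_ne d 0 with rfl | hd
  · simpa [hb0] using hc0
  calc ‖b d * ∏ k, w k ^ d k‖ ≤ 1 * c ^ d.degree := by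
        rw [norm_mul]
        exact mul_le_mul (hb d) (norm_prod_pow_le_pow_degree hw d) (norm_nonneg _) zero_le_one
    _ ≤ c := by
        rw [one_mul]
        exact pow_le_of_le_one hc0 hc1 (by rwa [Ne, Finsupp.degree_eq_zero_iff])

lemma norm_tsum_le_mul_of_eq_zero_off [DecidableEq ι] (S : Set ι) {i : ι} (hi : i ∈ S) {q B : ℝ} {l : F}
    (hb : ∀ d, ‖b d‖ ≤ 1) (hb0 : b 0 = 0)
    (hlin : ∀ j, b (Finsupp.single j 1) = if j = i then l else 0)
    (hinv : ∀ d : ι →₀ ℕ, (∀ j ∈ S, d j = 0) → b d = 0)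
    (hl : ‖l‖ ≤ q) (hcq : c ≤ q) (hc0 : 0 ≤ c) (hc1 : c ≤ 1)
    (hw : ∀ k, ‖w k‖ ≤ c) (hwS : ∀ j ∈ S, ‖w j‖ ≤ B) :
    ‖∑' d, b d * ∏ k, w k ^ d k‖ ≤ q * B := by
  have hq : 0 ≤ q := hc0.trans hcq
  have hB : 0 ≤ B := (norm_nonneg _).trans (hwS i hi)
  refine IsUltrametricDist.norm_tsum_le_of_forall_le_of_nonneg (mul_nonneg hq hB) fun d => ?_
  obtain hd | hd | hd : d.degree = 0 ∨ d.degree = 1 ∨ 2 ≤ d.degree := by omega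
  · rw [Finsupp.degree_eq_zero_iff] at hd
    simpa [hd, hb0] using mul_nonneg hq hB
  · obtain ⟨j, rfl⟩ := Finsupp.exists_eq_single_of_degree_eq_one hd
    rw [hlin]
    split_ifs with hji
    · subst hji
      simpa [Finsupp.single_apply] using mul_le_mul hl (hwS j hi) (norm_nonneg _) hq
    · simpa using mul_nonneg hq hB
  by_cases hbd : b d = 0
  · simpa [hbd] using mul_nonneg hq hB
  obtain ⟨j, hjS, hj⟩ : ∃ j ∈ S, d j ≠ 0 := by
    by_contra! h
    exact hbd (hinv d h)
  calc ‖b d * ∏ k, w k ^ d k‖ ≤ 1 * (‖w j‖ * c ^ (d.degree - 1)) := by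
        rw [norm_mul]
        exact mul_le_mul (hb d) (norm_prod_pow_le_norm_mul_pow hw hj) (norm_nonneg _)
          zero_le_one
    _ ≤ B * q := by
        rw [one_mul]
        exact mul_le_mul (hwS j hjS) ((pow_le_of_le_one hc0 hc1 (by omega)).trans hcq)
          (by positivity) hB
    _ = q * B := mul_comm _ _

end Series

theorem stmt15_general (F : Type*) [NontriviallyNormedField F] [IsUltrametricDist F]
    (n r : ℕ)
    (a : Fin n → (Fin n →₀ ℕ) → F) (l : Fin n → F)
    (hbd : ∀ i d, ‖a i d‖ ≤ 1)
    (hconst : ∀ i, a i 0 = 0)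
    (hlin : ∀ i j : Fin n, a i (Finsupp.single j 1) = if j = i then l i else 0)
    (hattr : ∀ i : Fin n, (i : ℕ) < r → ‖l i‖ < 1)
    (hinv : ∀ i : Fin n, (i : ℕ) < r → ∀ d : Fin n →₀ ℕ,
      (∀ j : Fin n, (j : ℕ) < r → d j = 0) → a i d = 0)
    (φ : (Fin n → F) → (Fin n → F))
    (hφ : ∀ z : Fin n → F, (∀ j, ‖z j‖ < 1) →
      ∀ i, φ z i = ∑' d : Fin n →₀ ℕ, a i d * ∏ j, z j ^ d j) :
    ∃ c : ℝ, 0 < c ∧ c < 1 ∧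
      ∀ z : Fin n → F, (∀ j, ‖z j‖ ≤ c) → (∃ i : Fin n, (i : ℕ) < r ∧ z i ≠ 0) →
        (∀ i : Fin n, (i : ℕ) < r →
          Filter.Tendsto (fun k => ‖φ^[k] z i‖) Filter.atTop (nhds 0)) ∧
        (∀ k : ℕ, 0 < k → φ^[k] z ≠ z) := by
  obtain ⟨μ, hμ1, hμ⟩ := exists_lt_one_forall_le hattr
  set q := max μ (1 / 2)
  have hq0 : 0 ≤ q := le_max_of_le_right (by norm_num)
  have hq1 : q < 1 := max_lt hμ1 (by norm_num)
  let S : Set (Fin n) := {j | (j : ℕ) < r}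
  let P : ℝ → Set (Fin n → F) := fun B => {w | (∀ j, ‖w j‖ ≤ 1 / 2) ∧ ∀ j ∈ S, ‖w j‖ ≤ B}
  have step : ∀ B, MapsTo φ (P B) (P (q * B)) := by
    rintro B w ⟨hw, hwS⟩
    have hw1 : ∀ j, ‖w j‖ < 1 := fun j => (hw j).trans_lt (by norm_num)
    refine ⟨fun j => ?_, fun i hi => ?_⟩ <;> rw [hφ w hw1]
    · exact norm_tsum_le_of_closedPolydisk (hbd j) (hconst j) (by norm_num) (by norm_num) hw
    · exact norm_tsum_le_mul_of_eq_zero_off S hi (hbd i) (hconst i) (hlin i) (hinv i hi)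
        ((hμ i hi).trans (le_max_left _ _)) (le_max_right _ _) (by norm_num) (by norm_num) hw hwS
  refine ⟨1 / 2, by norm_num, by norm_num, fun z hz ⟨i₀, hi₀, hzi₀⟩ => ?_⟩
  have hlim : ∀ i : Fin n, (i : ℕ) < r → Tendsto (fun k => ‖φ^[k] z i‖) atTop (𝓝 0) :=
    fun i hi => squeeze_zero (fun _ => norm_nonneg _)
      (fun k => (iterate_mem_of_mapsTo step (B := 1 / 2) ⟨hz, fun j _ => hz j⟩ k).2 i hi)
      (by simpa using (tendsto_pow_atTop_nhds_zero_of_lt_one hq0 hq1).mul_const (1 / 2 : ℝ))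
  exact ⟨hlim, fun k hk hper => hzi₀ (norm_eq_zero.1 (IsPeriodicPt.eq_of_tendsto hper hk
    (g := fun x => ‖x i₀‖) (hlim i₀ hi₀)))⟩

/-- Let `F` be complete nonarchimedean, and `φ = (φ₁,…,φₙ)` given by power series with
zero constant terms, coefficients of absolute value at most `1`, diagonal linear part
with multipliers `λᵢ` satisfying `‖λᵢ‖ < 1` for `i < r` and `‖λᵢ‖ = 1` for `i ≥ r`, and
with `V = {x₁ = ⋯ = x_r = 0}` invariant (every monomial of `φᵢ`, `i < r`, involves some
`x_j`, `j < r`).  Then there is `0 < c < 1` such that every `z` in the closed polydisk of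
radius `c` with some `zᵢ ≠ 0`, `i < r`, is attracted to `V` (the coordinates `i < r` of
the iterates tend to `0`); in particular no such `z` is periodic. -/
theorem stmt15 (F : Type*) [NontriviallyNormedField F] [IsUltrametricDist F]
    [CompleteSpace F] (n r : ℕ) (hr : r ≤ n)
    (a : Fin n → (Fin n →₀ ℕ) → F) (l : Fin n → F)
    (hbd : ∀ i d, ‖a i d‖ ≤ 1)
    (hconst : ∀ i, a i 0 = 0)
    (hlin : ∀ i j : Fin n, a i (Finsupp.single j 1) = if j = i then l i else 0)
    (hattr : ∀ i : Fin n, (i : ℕ) < r → ‖l i‖ < 1)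
    (hindiff : ∀ i : Fin n, r ≤ (i : ℕ) → ‖l i‖ = 1)
    (hinv : ∀ i : Fin n, (i : ℕ) < r → ∀ d : Fin n →₀ ℕ,
      (∀ j : Fin n, (j : ℕ) < r → d j = 0) → a i d = 0)
    (φ : (Fin n → F) → (Fin n → F))
    (hφ : ∀ z : Fin n → F, (∀ j, ‖z j‖ < 1) →
      ∀ i, φ z i = ∑' d : Fin n →₀ ℕ, a i d * ∏ j, z j ^ d j) :
    ∃ c : ℝ, 0 < c ∧ c < 1 ∧
      ∀ z : Fin n → F, (∀ j, ‖z j‖ ≤ c) → (∃ i : Fin n, (i : ℕ) < r ∧ z i ≠ 0) →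
        (∀ i : Fin n, (i : ℕ) < r →
          Filter.Tendsto (fun k => ‖φ^[k] z i‖) Filter.atTop (nhds 0)) ∧
        (∀ k : ℕ, 0 < k → φ^[k] z ≠ z) :=
  stmt15_general F n r a l hbd hconst hlin hattr hinv φ hφ
end
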